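/- arXiv:2211.14218 — 6 statements merged into one kernel-verified Lean document; each statement's English description precedes it below -/
import Mathlib

section
/- For a binomial random variable X ~ Bin(n,p) and any natural number k, the probability that X ≥ k is at most e·(np)^k. -/
/-!
Write `λ = np`. Each binomial term is at most `C(n,j) p^j ≤ λ^j / j!`. If `λ ≤ 1`, then
`λ^j ≤ λ^k` for `j ≥ k`, so the tail is at most `λ^k ∑ 1/j! ≤ e λ^k`. If `λ > 1`, the tail is at
most the total mass `1 ≤ e λ^k`.
-/

open Finset Nat

lemma choose_mul_pow_mul_one_sub_pow_le {p : ℝ} (hp0 : 0 ≤ p) (hp1 : p ≤ 1) (n j : ℕ) :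
    (n.choose j : ℝ) * p ^ j * (1 - p) ^ (n - j) ≤ ((n : ℝ) * p) ^ j / j ! :=
  calc (n.choose j : ℝ) * p ^ j * (1 - p) ^ (n - j)
      ≤ (n.choose j : ℝ) * p ^ j := by
        apply mul_le_of_le_one_right (by positivity)
        exact pow_le_one₀ (by linarith) (by linarith)
    _ ≤ (n : ℝ) ^ j / j ! * p ^ j := by gcongr; exact choose_le_pow_div j n
    _ = ((n : ℝ) * p) ^ j / j ! := by ring

lemma sum_Icc_choose_mul_pow_mul_one_sub_pow_le_one {p : ℝ} (hp0 : 0 ≤ p) (hp1 : p ≤ 1)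
    (n k : ℕ) :
    ∑ j ∈ Icc k n, (n.choose j : ℝ) * p ^ j * (1 - p) ^ (n - j) ≤ 1 :=
  calc ∑ j ∈ Icc k n, (n.choose j : ℝ) * p ^ j * (1 - p) ^ (n - j)
      ≤ ∑ j ∈ range (n + 1), (n.choose j : ℝ) * p ^ j * (1 - p) ^ (n - j) := by
        apply sum_le_sum_of_subset_of_nonneg
        · exact fun j hj => mem_range.2 (lt_succ_of_le (mem_Icc.1 hj).2)
        · intro j _ _
          have : 0 ≤ 1 - p := by linarith
          positivity
    _ = (p + (1 - p)) ^ n := by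
        rw [add_pow]
        exact sum_congr rfl fun j _ => by ring
    _ = 1 := by simp

lemma sum_Icc_pow_div_factorial_le {x : ℝ} (hx0 : 0 ≤ x) (hx1 : x ≤ 1) (k n : ℕ) :
    ∑ j ∈ Icc k n, x ^ j / j ! ≤ Real.exp 1 * x ^ k :=
  calc ∑ j ∈ Icc k n, x ^ j / j !
      ≤ ∑ j ∈ Icc k n, x ^ k * (1 / j ! : ℝ) := by
        refine sum_le_sum fun j hj => ?_
        rw [mul_one_div]
        exact div_le_div_of_nonneg_right (pow_le_pow_of_le_one hx0 hx1 (mem_Icc.1 hj).1)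
          (by positivity)
    _ ≤ x ^ k * ∑ j ∈ range (n + 1), (1 / j ! : ℝ) := by
        rw [← mul_sum]
        gcongr
        exact fun j hj => mem_range.2 (lt_succ_of_le (mem_Icc.1 hj).2)
    _ ≤ x ^ k * Real.exp 1 := by
        gcongr
        simpa using Real.sum_le_exp_of_nonneg zero_le_one (n + 1)
    _ = Real.exp 1 * x ^ k := mul_comm _ _

/-- For a binomial random variable `X ~ Bin(n,p)` and any natural number `k`,
`P(X ≥ k) ≤ e · (np)^k`. -/
theorem binomial_tail_le (n : ℕ) (p : ℝ) (hp0 : 0 ≤ p) (hp1 : p ≤ 1) (k : ℕ) :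
    ∑ j ∈ Finset.Icc k n, (n.choose j : ℝ) * p ^ j * (1 - p) ^ (n - j)
      ≤ Real.exp 1 * ((n : ℝ) * p) ^ k := by
  rcases le_or_gt ((n : ℝ) * p) 1 with hnp | hnp
  · calc ∑ j ∈ Icc k n, (n.choose j : ℝ) * p ^ j * (1 - p) ^ (n - j)
        ≤ ∑ j ∈ Icc k n, ((n : ℝ) * p) ^ j / j ! :=
          sum_le_sum fun j _ => choose_mul_pow_mul_one_sub_pow_le hp0 hp1 n j
      _ ≤ Real.exp 1 * ((n : ℝ) * p) ^ k := sum_Icc_pow_div_factorial_le (by positivity) hnp k n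
  · calc ∑ j ∈ Icc k n, (n.choose j : ℝ) * p ^ j * (1 - p) ^ (n - j)
        ≤ 1 := sum_Icc_choose_mul_pow_mul_one_sub_pow_le_one hp0 hp1 n k
      _ ≤ Real.exp 1 * ((n : ℝ) * p) ^ k :=
          one_le_mul_of_one_le_of_one_le (Real.one_le_exp zero_le_one) (one_le_pow₀ hnp.le)
end

section
/- For all natural numbers n, p ∈ [0,1] and k, the partial sum of the binomial distribution satisfies ∑_{j=k}^{n} C(n,j) p^j (1-p)^{n-j} ≤ (np)^k · ∑_{j=0}^{∞} 1/j!. -/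
/-!
Each binomial term is at most `(np)^j / j!`, since `C(n,j) ≤ n^j / j!` and `(1-p)^(n-j) ≤ 1`.
If `np ≤ 1`, then `(np)^j ≤ (np)^k` for `j ≥ k`, and summing gives the bound. If `np > 1`, the
tail is at most the total mass `1 ≤ (np)^k`, while `∑ 1/j! ≥ 1`.
-/

open Finset Nat

lemma summable_one_div_factorial : Summable fun j : ℕ => (1 : ℝ) / j ! := by
  simpa using Real.summable_pow_div_factorial 1

lemma one_le_tsum_one_div_factorial : (1 : ℝ) ≤ ∑' j : ℕ, (1 : ℝ) / j ! := by
  simpa using summable_one_div_factorial.sum_le_tsum {0} fun j _ => by positivity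

lemma sum_pow_div_factorial_le_of_le_one {x : ℝ} (hx0 : 0 ≤ x) (hx1 : x ≤ 1) {k : ℕ}
    {s : Finset ℕ} (hs : ∀ j ∈ s, k ≤ j) :
    ∑ j ∈ s, x ^ j / j ! ≤ x ^ k * ∑' j : ℕ, (1 : ℝ) / j ! :=
  calc ∑ j ∈ s, x ^ j / j ! ≤ ∑ j ∈ s, x ^ k * (1 / j !) :=
        sum_le_sum fun j hj => by
          rw [mul_one_div]
          exact div_le_div_of_nonneg_right (pow_le_pow_of_le_one hx0 hx1 (hs j hj)) (by positivity)
    _ = x ^ k * ∑ j ∈ s, (1 : ℝ) / j ! := (mul_sum _ _ _).symm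
    _ ≤ x ^ k * ∑' j : ℕ, (1 : ℝ) / j ! := by
        gcongr
        exact summable_one_div_factorial.sum_le_tsum s fun j _ => by positivity

lemma choose_mul_pow_mul_pow_le_pow_div_factorial (n j : ℕ) {p q : ℝ} (hp : 0 ≤ p)
    (hq0 : 0 ≤ q) (hq1 : q ≤ 1) :
    (n.choose j : ℝ) * p ^ j * q ^ (n - j) ≤ (n * p) ^ j / j ! :=
  calc (n.choose j : ℝ) * p ^ j * q ^ (n - j) ≤ (n.choose j : ℝ) * p ^ j :=
        mul_le_of_le_one_right (by positivity) (pow_le_one₀ hq0 hq1)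
    _ ≤ (n : ℝ) ^ j / j ! * p ^ j := by
        gcongr
        exact_mod_cast Nat.choose_le_pow_div j n
    _ = (n * p) ^ j / j ! := by ring

lemma sum_choose_mul_pow_mul_one_sub_pow_le_one (n : ℕ) {p : ℝ} (hp0 : 0 ≤ p) (hp1 : p ≤ 1)
    {s : Finset ℕ} (hs : s ⊆ range (n + 1)) :
    ∑ j ∈ s, (n.choose j : ℝ) * p ^ j * (1 - p) ^ (n - j) ≤ 1 := by
  have hq : 0 ≤ 1 - p := by linarith
  calc ∑ j ∈ s, (n.choose j : ℝ) * p ^ j * (1 - p) ^ (n - j)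
      ≤ ∑ j ∈ range (n + 1), (n.choose j : ℝ) * p ^ j * (1 - p) ^ (n - j) :=
        sum_le_sum_of_subset_of_nonneg hs fun j _ _ => by positivity
    _ = (p + (1 - p)) ^ n := by
        rw [add_pow]
        exact sum_congr rfl fun j _ => by ring
    _ = 1 := by simp

/-- For all natural numbers `n`, `p ∈ [0,1]` and `k`, the partial sum of the binomial
distribution satisfies `∑_{j=k}^{n} C(n,j) p^j (1-p)^{n-j} ≤ (np)^k · ∑_{j=0}^{∞} 1/j!`. -/
theorem binomial_tail_le_tsum (n : ℕ) (p : ℝ) (hp0 : 0 ≤ p) (hp1 : p ≤ 1) (k : ℕ) :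
    ∑ j ∈ Finset.Icc k n, (n.choose j : ℝ) * p ^ j * (1 - p) ^ (n - j)
      ≤ ((n : ℝ) * p) ^ k * ∑' j : ℕ, (1 : ℝ) / (Nat.factorial j) := by
  rcases le_or_gt ((n : ℝ) * p) 1 with hnp | hnp
  · calc ∑ j ∈ Icc k n, (n.choose j : ℝ) * p ^ j * (1 - p) ^ (n - j)
          ≤ ∑ j ∈ Icc k n, ((n : ℝ) * p) ^ j / j ! :=
          sum_le_sum fun j _ =>
            choose_mul_pow_mul_pow_le_pow_div_factorial n j hp0 (by linarith) (by linarith)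
      _ ≤ ((n : ℝ) * p) ^ k * ∑' j : ℕ, (1 : ℝ) / j ! :=
          sum_pow_div_factorial_le_of_le_one (by positivity) hnp fun j hj => (mem_Icc.1 hj).1
  · calc ∑ j ∈ Icc k n, (n.choose j : ℝ) * p ^ j * (1 - p) ^ (n - j) ≤ 1 :=
          sum_choose_mul_pow_mul_one_sub_pow_le_one n hp0 hp1 fun j hj => by
            simp only [mem_Icc, mem_range] at hj ⊢
            omega
      _ ≤ ((n : ℝ) * p) ^ k * ∑' j : ℕ, (1 : ℝ) / j ! :=
          one_le_mul_of_one_le_of_one_le (one_le_pow₀ hnp.le) one_le_tsum_one_div_factorial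
end

section
/- If X ~ Bin(n,p), then P(X > ⌈np⌉) ≤ 1/2. -/
open Finset

lemma choose_ineq (n m : ℕ) (hn : n ≤ 2*m+1) :
    ∀ i, m+1+i ≤ n → n.choose (m+1+i) * m^(2*i+1) ≤ n.choose (m-i) * (n-m)^(2*i+1) := by
  intro i
  induction i with
  | zero =>
    intro h
    simp only [Nat.sub_zero]
    rw [pow_one, pow_one]
    calc n.choose (m+1+0) * m ≤ n.choose (m+1) * (m+1) := by
          simp; exact Nat.mul_le_mul_left _ (Nat.le_succ m)
      _ = n.choose m * (n - m) := Nat.choose_succ_right_eq n m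
  | succ i ih =>
    intro h
    have hA1 : n - m ≤ m + 1 := by omega
    have hiA : i + 2 ≤ n - m := by omega
    have him : i + 1 ≤ m := by omega
    set A := n - m with hA
    -- identities
    have id1 : n.choose (m+1+(i+1)) * (m+i+2) = n.choose (m+1+i) * (A - (i+1)) := by
      have := Nat.choose_succ_right_eq n (m+1+i)
      have e : m+1+i+1 = m+1+(i+1) := by ring
      rw [e] at this
      have e2 : n - (m+1+i) = A - (i+1) := by omega
      rw [e2] at this
      calc n.choose (m+1+(i+1)) * (m+i+2) = n.choose (m+1+(i+1)) * (m+1+i+1) := by ring_nf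
        _ = n.choose (m+1+i) * (A - (i+1)) := this
    have id2 : n.choose (m-i) * (m-i) = n.choose (m-(i+1)) * (A + (i+1)) := by
      have := Nat.choose_succ_right_eq n (m-(i+1))
      have e : m-(i+1)+1 = m-i := by omega
      rw [e] at this
      have e2 : n - (m-(i+1)) = A + (i+1) := by omega
      rw [e2] at this
      exact this
    -- quadratic inequality
    have quad : (A - (i+1)) * (A + (i+1)) * m^2 ≤ (m-i) * (m+i+2) * A^2 := by
      have h1 : i + 1 ≤ A := by omega
      have h2 : i ≤ m := by omega
      zify [h1, h2]
      rcases le_or_gt A m with hAm | hAm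
      · have hAm' : (A:ℤ) ≤ m := by exact_mod_cast hAm
        have hi0 : (0:ℤ) ≤ (i:ℤ) := by positivity
        have hA0 : (0:ℤ) ≤ (A:ℤ) := by positivity
        have hm2 : (0:ℤ) ≤ (m:ℤ)^2 - A^2 := by nlinarith
        nlinarith [mul_nonneg (sq_nonneg ((i:ℤ)+1)) hm2, sq_nonneg (A:ℤ), mul_nonneg hA0 (show (0:ℤ) ≤ 2*m+1 by positivity), mul_nonneg (mul_nonneg hA0 hA0) (show (0:ℤ) ≤ 2*m+1 by positivity)]
      · have hAm' : (A:ℤ) = m+1 := by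
          have : A = m+1 := by omega
          exact_mod_cast this
        rw [hAm']
        have h3 : ((i:ℤ)+1) ≤ m := by exact_mod_cast him
        have hi0 : (0:ℤ) ≤ (i:ℤ) := by positivity
        have hfac : (0:ℤ) ≤ ((m:ℤ)-i)*((m:ℤ)+i+2) := by nlinarith
        calc ((m:ℤ) + 1 - ((i:ℤ) + 1)) * ((m:ℤ) + 1 + ((i:ℤ) + 1)) * (m:ℤ) ^ 2
            = (((m:ℤ)-i)*((m:ℤ)+i+2)) * (m:ℤ)^2 := by ring
          _ ≤ (((m:ℤ)-i)*((m:ℤ)+i+2)) * ((m:ℤ)+1)^2 :=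
              mul_le_mul_of_nonneg_left (by nlinarith) hfac
          _ = ((m:ℤ) - (i:ℤ)) * ((m:ℤ) + (i:ℤ) + 2) * ((m:ℤ) + 1) ^ 2 := by ring
    -- combine
    have key : n.choose (m+1+(i+1)) * m^(2*(i+1)+1) * ((m+i+2) * (A+(i+1)))
        ≤ n.choose (m-(i+1)) * A^(2*(i+1)+1) * ((m+i+2) * (A+(i+1))) := by
      have ihh := ih (by omega)
      calc n.choose (m+1+(i+1)) * m^(2*(i+1)+1) * ((m+i+2) * (A+(i+1)))
          = (n.choose (m+1+(i+1)) * (m+i+2)) * (m^(2*i+1) * m^2 * (A+(i+1))) := by ring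
        _ = (n.choose (m+1+i) * (A - (i+1))) * (m^(2*i+1) * m^2 * (A+(i+1))) := by rw [id1]
        _ = (n.choose (m+1+i) * m^(2*i+1)) * ((A - (i+1)) * (A + (i+1)) * m^2) := by ring
        _ ≤ (n.choose (m-i) * A^(2*i+1)) * ((m-i) * (m+i+2) * A^2) :=
            Nat.mul_le_mul ihh quad
        _ = (n.choose (m-i) * (m-i)) * (A^(2*i+1) * A^2 * (m+i+2)) := by ring
        _ = (n.choose (m-(i+1)) * (A+(i+1))) * (A^(2*i+1) * A^2 * (m+i+2)) := by rw [id2]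
        _ = n.choose (m-(i+1)) * A^(2*(i+1)+1) * ((m+i+2) * (A+(i+1))) := by ring
    exact Nat.le_of_mul_le_mul_right key (by positivity)



lemma discrete_case (n m : ℕ) (p : ℝ) (hp0 : 0 ≤ p) (hp1 : p ≤ 1) (hmn : m < n)
    (hn2 : n ≤ 2*m+1) (hpm : (n:ℝ)*p ≤ m) :
    ∑ j ∈ Finset.Ioc m n, (n.choose j : ℝ) * p ^ j * (1 - p) ^ (n - j) ≤ 1/2 := by
  set b : ℕ → ℝ := fun j => (n.choose j : ℝ) * p ^ j * (1 - p) ^ (n - j) with hbdef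
  have hq0 : (0:ℝ) ≤ 1 - p := by linarith
  have hb : ∀ j, 0 ≤ b j := fun j => by
    simp only [hbdef]; positivity
  have hn0 : 0 < n := Nat.pos_of_ne_zero (by omega)
  have hn0' : (0:ℝ) < n := by exact_mod_cast hn0
  -- pairing inequality
  have pair : ∀ i, i < n - m → b (m+1+i) ≤ b (m-i) := by
    intro i hi
    have him : i ≤ m := by omega
    have hin : m + 1 + i ≤ n := by omega
    have key : (n.choose (m+1+i) : ℝ) * p^(2*i+1) ≤ (n.choose (m-i) : ℝ) * (1-p)^(2*i+1) := by
      have hnat := choose_ineq n m hn2 i hin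
      have hR : (n.choose (m+1+i):ℝ) * (m:ℝ)^(2*i+1)
          ≤ (n.choose (m-i):ℝ) * ((n:ℝ)-(m:ℝ))^(2*i+1) := by
        have hc := (Nat.cast_le (α := ℝ)).mpr hnat
        push_cast [Nat.cast_sub hmn.le] at hc
        exact hc
      have h1 : p ≤ (m:ℝ)/n := by
        rw [le_div_iff₀ hn0']; linarith [hpm]
      have h2 : ((n:ℝ)-m)/n ≤ 1-p := by
        rw [div_le_iff₀ hn0']; nlinarith [hpm]
      have h2' : (0:ℝ) ≤ ((n:ℝ)-m)/n := by
        apply div_nonneg _ hn0'.le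
        have : (m:ℝ) ≤ n := by exact_mod_cast hmn.le
        linarith
      calc (n.choose (m+1+i) : ℝ) * p^(2*i+1)
          ≤ (n.choose (m+1+i) : ℝ) * ((m:ℝ)/n)^(2*i+1) := by
            apply mul_le_mul_of_nonneg_left _ (by positivity)
            exact pow_le_pow_left₀ hp0 h1 _
        _ = ((n.choose (m+1+i) : ℝ) * (m:ℝ)^(2*i+1)) / (n:ℝ)^(2*i+1) := by
            rw [div_pow]; ring
        _ ≤ ((n.choose (m-i) : ℝ) * ((n:ℝ)-m)^(2*i+1)) / (n:ℝ)^(2*i+1) := by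
            apply div_le_div_of_nonneg_right hR (by positivity) |>.trans_eq rfl
        _ = (n.choose (m-i) : ℝ) * (((n:ℝ)-m)/n)^(2*i+1) := by
            rw [div_pow]; ring
        _ ≤ (n.choose (m-i) : ℝ) * (1-p)^(2*i+1) := by
            apply mul_le_mul_of_nonneg_left _ (by positivity)
            exact pow_le_pow_left₀ h2' h2 _
    have hp' : p ^ (m+1+i) = p^(2*i+1) * p^(m-i) := by
      rw [← pow_add]; congr 1; omega
    have hq' : (1-p) ^ (n-(m-i)) = (1-p)^(2*i+1) * (1-p)^(n-m-1-i) := by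
      rw [← pow_add]; congr 1; omega
    have hq'' : (1-p) ^ (n-(m+1+i)) = (1-p)^(n-m-1-i) := by congr 1; omega
    simp only [hbdef]
    rw [hp', hq', hq'']
    calc (n.choose (m+1+i) : ℝ) * (p^(2*i+1) * p^(m-i)) * (1-p)^(n-m-1-i)
        = ((n.choose (m+1+i) : ℝ) * p^(2*i+1)) * (p^(m-i) * (1-p)^(n-m-1-i)) := by ring
      _ ≤ ((n.choose (m-i) : ℝ) * (1-p)^(2*i+1)) * (p^(m-i) * (1-p)^(n-m-1-i)) := by
          apply mul_le_mul_of_nonneg_right key (by positivity)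
      _ = (n.choose (m-i) : ℝ) * p^(m-i) * ((1-p)^(2*i+1) * (1-p)^(n-m-1-i)) := by ring
  -- rewrite tail sum
  have hIoc : Finset.Ioc m n = Finset.Ico (m+1) (n+1) := by
    ext j; simp only [Finset.mem_Ioc, Finset.mem_Ico]; omega
  have tail_eq : ∑ j ∈ Finset.Ioc m n, b j = ∑ i ∈ Finset.range (n-m), b (m+1+i) := by
    rw [hIoc, Finset.sum_Ico_eq_sum_range, Nat.succ_sub_succ]
  have tail_le : ∑ j ∈ Finset.Ioc m n, b j ≤ ∑ i ∈ Finset.range (n-m), b (m-i) := by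
    rw [tail_eq]
    apply Finset.sum_le_sum
    intro i hi
    exact pair i (Finset.mem_range.mp hi)
  have low_le : ∑ i ∈ Finset.range (n-m), b (m-i) ≤ ∑ i ∈ Finset.range (m+1), b (m-i) := by
    apply Finset.sum_le_sum_of_subset_of_nonneg
    · apply Finset.range_subset_range.mpr; omega
    · intro i _ _; exact hb _
  have reflect : ∑ i ∈ Finset.range (m+1), b (m-i) = ∑ j ∈ Finset.range (m+1), b j := by
    have := Finset.sum_range_reflect b (m+1)
    simpa using this
  have total : ∑ j ∈ Finset.range (n+1), b j = 1 := by
    calc ∑ j ∈ Finset.range (n+1), b j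
        = ∑ j ∈ Finset.range (n+1), p^j * (1-p)^(n-j) * (n.choose j : ℝ) :=
          Finset.sum_congr rfl (fun j _ => by simp only [hbdef]; ring)
      _ = (p + (1-p))^n := (add_pow p (1-p) n).symm
      _ = 1 := by norm_num
  have split : ∑ j ∈ Finset.range (m+1), b j + ∑ j ∈ Finset.Ioc m n, b j
      = ∑ j ∈ Finset.range (n+1), b j := by
    rw [hIoc, Finset.range_eq_Ico, Finset.range_eq_Ico]
    exact Finset.sum_Ico_consecutive b (m := 0) (n := m+1) (k := n+1) (by omega) (by omega)
  have hfin : ∑ j ∈ Finset.Ioc m n, b j ≤ ∑ j ∈ Finset.range (m+1), b j :=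
    tail_le.trans (low_le.trans (le_of_eq reflect))
  linarith [hfin, split, total]


lemma key_poly (a B : ℕ) (u : ℝ) (h0 : 0 ≤ u) (ha : u ≤ a) (hB : a ≤ B) :
    ((a:ℝ)-u)^a * ((B:ℝ)+u)^B ≤ ((a:ℝ)+u)^a * ((B:ℝ)-u)^B := by
  rcases Nat.eq_zero_or_pos a with rfl | hapos
  · have : u = 0 := le_antisymm (by exact_mod_cast ha) h0
    subst this
    simp
  have haR : (1:ℝ) ≤ a := by exact_mod_cast hapos
  have hBR : (a:ℝ) ≤ B := by exact_mod_cast hB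
  rcases eq_or_lt_of_le ha with heq | hua
  · have h1 : ((a:ℝ) - u)^a = 0 := by
      rw [← heq, sub_self]
      exact zero_pow (by omega)
    rw [h1, zero_mul]
    apply mul_nonneg (pow_nonneg (by linarith) _) (pow_nonneg (by rw [heq]; linarith) _)
  -- main case : 0 ≤ u < a ≤ B
  set φ : ℝ → ℝ := fun x =>
    (a:ℝ) * Real.log ((a:ℝ)+x) + (B:ℝ) * Real.log ((B:ℝ)-x)
      - (a:ℝ) * Real.log ((a:ℝ)-x) - (B:ℝ) * Real.log ((B:ℝ)+x) with hφ
  have hderiv : ∀ x ∈ Set.Icc (0:ℝ) u, HasDerivAt φ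
      ((a:ℝ) * (1/((a:ℝ)+x)) + (B:ℝ) * (-1/((B:ℝ)-x))
        - (a:ℝ) * (-1/((a:ℝ)-x)) - (B:ℝ) * (1/((B:ℝ)+x))) x := by
    intro x hx
    obtain ⟨hx0, hxu⟩ := hx
    have hax : x < (a:ℝ) := lt_of_le_of_lt hxu hua
    have h1 : (a:ℝ) + x ≠ 0 := by intro h; linarith
    have h2 : (a:ℝ) - x ≠ 0 := by intro h; linarith
    have h3 : (B:ℝ) - x ≠ 0 := by intro h; linarith
    have h4 : (B:ℝ) + x ≠ 0 := by intro h; linarith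
    have d1 : HasDerivAt (fun x : ℝ => Real.log ((a:ℝ)+x)) (1/((a:ℝ)+x)) x := by
      simpa using (((hasDerivAt_id x).const_add (a:ℝ)).log h1)
    have d2 : HasDerivAt (fun x : ℝ => Real.log ((B:ℝ)-x)) (-1/((B:ℝ)-x)) x := by
      simpa using (((hasDerivAt_id x).const_sub (B:ℝ)).log h3)
    have d3 : HasDerivAt (fun x : ℝ => Real.log ((a:ℝ)-x)) (-1/((a:ℝ)-x)) x := by
      simpa using (((hasDerivAt_id x).const_sub (a:ℝ)).log h2)
    have d4 : HasDerivAt (fun x : ℝ => Real.log ((B:ℝ)+x)) (1/((B:ℝ)+x)) x := by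
      simpa using (((hasDerivAt_id x).const_add (B:ℝ)).log h4)
    exact (((d1.const_mul (a:ℝ)).add (d2.const_mul (B:ℝ))).sub
      (d3.const_mul (a:ℝ))).sub (d4.const_mul (B:ℝ))
  have hmono : MonotoneOn φ (Set.Icc (0:ℝ) u) := by
    apply monotoneOn_of_deriv_nonneg (convex_Icc 0 u)
    · exact fun x hx => (hderiv x hx).continuousAt.continuousWithinAt
    · intro x hx
      rw [interior_Icc] at hx
      exact (hderiv x ⟨hx.1.le, hx.2.le⟩).differentiableAt.differentiableWithinAt
    · intro x hx
      rw [interior_Icc] at hx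
      rw [(hderiv x ⟨hx.1.le, hx.2.le⟩).deriv]
      obtain ⟨hx0, hxu⟩ := hx
      have hax : x < (a:ℝ) := lt_of_lt_of_le hxu hua.le
      have h2 : (0:ℝ) < (a:ℝ) - x := by linarith
      have h1 : (0:ℝ) < (a:ℝ) + x := by linarith
      have h3 : (0:ℝ) < (B:ℝ) - x := by linarith
      have h4 : (0:ℝ) < (B:ℝ) + x := by linarith
      have key : (B:ℝ)/((B:ℝ)-x) + (B:ℝ)/((B:ℝ)+x) ≤ (a:ℝ)/((a:ℝ)+x) + (a:ℝ)/((a:ℝ)-x) := by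
        rw [div_add_div _ _ (ne_of_gt h3) (ne_of_gt h4),
          div_add_div _ _ (ne_of_gt h1) (ne_of_gt h2),
          div_le_div_iff₀ (by positivity) (by positivity)]
        have hsq : 0 ≤ x^2 * ((B:ℝ)^2 - (a:ℝ)^2) := by
          apply mul_nonneg (sq_nonneg x)
          nlinarith
        nlinarith [hsq]
      have e1 : (a:ℝ) * (1/((a:ℝ)+x)) + (B:ℝ) * (-1/((B:ℝ)-x))
          - (a:ℝ) * (-1/((a:ℝ)-x)) - (B:ℝ) * (1/((B:ℝ)+x))
          = ((a:ℝ)/((a:ℝ)+x) + (a:ℝ)/((a:ℝ)-x)) - ((B:ℝ)/((B:ℝ)-x) + (B:ℝ)/((B:ℝ)+x)) := by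
        ring
      rw [e1]
      linarith [key]
  have hφ0 : φ 0 = 0 := by
    simp only [hφ, add_zero, sub_zero]
    ring
  have hφu : 0 ≤ φ u := by
    have := hmono (Set.left_mem_Icc.mpr h0) (Set.right_mem_Icc.mpr h0) h0
    rw [hφ0] at this
    exact this
  -- convert back
  have hau1 : (0:ℝ) < (a:ℝ) + u := by linarith
  have hau2 : (0:ℝ) < (a:ℝ) - u := by linarith
  have hau3 : (0:ℝ) < (B:ℝ) - u := by linarith
  have hau4 : (0:ℝ) < (B:ℝ) + u := by linarith
  have hlog : Real.log (((a:ℝ)-u)^a * ((B:ℝ)+u)^B) ≤ Real.log (((a:ℝ)+u)^a * ((B:ℝ)-u)^B) := by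
    rw [Real.log_mul (by positivity) (by positivity),
      Real.log_mul (by positivity) (by positivity),
      Real.log_pow, Real.log_pow, Real.log_pow, Real.log_pow]
    have := hφu
    simp only [hφ] at this
    linarith [this]
  have hX : (0:ℝ) < ((a:ℝ)-u)^a * ((B:ℝ)+u)^B := by positivity
  have hY : (0:ℝ) < ((a:ℝ)+u)^a * ((B:ℝ)-u)^B := by positivity
  exact (Real.log_le_log_iff hX hY).mp hlog

lemma key_poly' (a B : ℕ) (u : ℝ) (h0 : 0 ≤ u) (ha : u ≤ a) (hB : a ≤ B) (hB1 : 1 ≤ B) :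
    ((a:ℝ)-u)^a * ((B:ℝ)+u)^(B-1) ≤ ((a:ℝ)+u)^a * ((B:ℝ)-u)^(B-1) := by
  have haR : (0:ℝ) ≤ a := Nat.cast_nonneg a
  have hBR : (a:ℝ) ≤ B := by exact_mod_cast hB
  have hBu : (0:ℝ) < (B:ℝ) + u := by
    have : (1:ℝ) ≤ B := by exact_mod_cast hB1
    linarith
  have hBu' : (0:ℝ) ≤ (B:ℝ) - u := by linarith
  have hkey := key_poly a B u h0 ha hB
  have hBe : (B-1)+1 = B := by omega
  have e1 : ((B:ℝ)+u)^B = ((B:ℝ)+u)^(B-1) * ((B:ℝ)+u) := by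
    rw [← pow_succ, hBe]
  have e2 : ((B:ℝ)-u)^B = ((B:ℝ)-u)^(B-1) * ((B:ℝ)-u) := by
    rw [← pow_succ, hBe]
  apply le_of_mul_le_mul_right _ hBu
  calc ((a:ℝ)-u)^a * ((B:ℝ)+u)^(B-1) * ((B:ℝ)+u)
      = ((a:ℝ)-u)^a * ((B:ℝ)+u)^B := by rw [e1]; ring
    _ ≤ ((a:ℝ)+u)^a * ((B:ℝ)-u)^B := hkey
    _ = ((a:ℝ)+u)^a * ((B:ℝ)-u)^(B-1) * ((B:ℝ)-u) := by rw [e2]; ring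
    _ ≤ ((a:ℝ)+u)^a * ((B:ℝ)-u)^(B-1) * ((B:ℝ)+u) := by
        apply mul_le_mul_of_nonneg_left (by linarith)
        apply mul_nonneg (pow_nonneg (by linarith) _) (pow_nonneg hBu' _)

lemma hasDeriv_term (n j : ℕ) (hj1 : 1 ≤ j) (hjn : j ≤ n) (x : ℝ) :
    HasDerivAt (fun y : ℝ => (n.choose j : ℝ) * y^j * (1-y)^(n-j))
      (((j * n.choose j : ℕ) : ℝ) * x^(j-1) * (1-x)^(n-j)
        - (((j+1) * n.choose (j+1) : ℕ) : ℝ) * x^j * (1-x)^(n-j-1)) x := by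
  have hid : HasDerivAt (fun y : ℝ => 1 - y) (-1) x := (hasDerivAt_id x).const_sub 1
  have d2 : HasDerivAt (fun y : ℝ => (1-y)^(n-j))
      ((((n-j:ℕ):ℝ) * (1-x)^(n-j-1)) * (-1)) x := by
    have := (hasDerivAt_pow (n-j) (1-x)).comp x hid
    simpa [Function.comp_def] using this
  have d1 : HasDerivAt (fun y : ℝ => (n.choose j : ℝ) * y^j)
      ((n.choose j : ℝ) * ((j:ℝ) * x^(j-1))) x := (hasDerivAt_pow j x).const_mul _
  have dm := d1.fun_mul d2
  refine dm.congr_deriv ?_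
  have hcc : (((j+1) * n.choose (j+1) : ℕ):ℝ) = ((n.choose j * (n - j) : ℕ):ℝ) := by
    rw [mul_comm, Nat.choose_succ_right_eq]
  rw [hcc]
  push_cast [Nat.cast_sub hjn]
  ring

lemma sum_telescope (n m : ℕ) (hmn : m < n) (f : ℕ → ℝ) :
    ∑ j ∈ Finset.Ioc m n, (f j - f (j+1)) = f (m+1) - f (n+1) := by
  have hIoc : Finset.Ioc m n = Finset.Ico (m+1) (n+1) := by
    ext j; simp only [Finset.mem_Ioc, Finset.mem_Ico]; omega
  rw [hIoc, Finset.sum_Ico_eq_sum_range, Nat.succ_sub_succ]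
  have h2 : m+1+(n-m) = n+1 := by omega
  have := Finset.sum_range_sub' (fun i => f (m+1+i)) (n-m)
  simp only [add_zero] at this
  rw [h2] at this
  convert this using 2
  rfl

lemma analytic_case (n m : ℕ) (p : ℝ) (hp0 : 0 ≤ p) (hp1 : p ≤ 1)
    (hm1 : 1 ≤ m) (h2m : 2*m ≤ n) (hpm : (n:ℝ)*p ≤ m) :
    ∑ j ∈ Finset.Ioc m n, (n.choose j : ℝ) * p ^ j * (1 - p) ^ (n - j) ≤ 1/2 := by
  have hmn : m < n := by omega
  have hn0' : (0:ℝ) < n := by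
    have : 0 < n := by omega
    exact_mod_cast this
  have hmR : (1:ℝ) ≤ m := by exact_mod_cast hm1
  have h2mR : 2*(m:ℝ) ≤ n := by exact_mod_cast h2m
  set F : ℝ → ℝ := fun y => ∑ j ∈ Finset.Ioc m n, (n.choose j:ℝ) * y^j * (1-y)^(n-j) with hF
  set c : ℝ := (((m+1) * n.choose (m+1) : ℕ):ℝ) with hc
  set D : ℝ → ℝ := fun t => c * t^m * (1-t)^(n-m-1) with hD
  set T : ℝ → ℕ → ℝ := fun x j => ((j * n.choose j : ℕ):ℝ) * x^(j-1) * (1-x)^(n-j) with hT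
  -- derivative of F
  have hSd : ∀ x : ℝ, HasDerivAt F (D x) x := by
    intro x
    have h1 : ∀ j ∈ Finset.Ioc m n,
        HasDerivAt (fun y : ℝ => (n.choose j:ℝ) * y^j * (1-y)^(n-j)) (T x j - T x (j+1)) x := by
      intro j hj
      obtain ⟨hjm, hjn⟩ := Finset.mem_Ioc.mp hj
      have := hasDeriv_term n j (by omega) hjn x
      simp only [hT]
      convert this using 2
      rw [show j+1-1 = j by omega, show n-(j+1) = n-j-1 by omega]
    have hsum := HasDerivAt.fun_sum h1
    have htel : ∑ j ∈ Finset.Ioc m n, (T x j - T x (j+1)) = T x (m+1) - T x (n+1) :=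
      sum_telescope n m hmn (T x)
    have hTn : T x (n+1) = 0 := by
      simp [hT, Nat.choose_succ_self]
    have hTm : T x (m+1) = D x := by
      simp only [hT, hD, hc]
      have e1 : m + 1 - 1 = m := by omega
      have e2 : n - (m+1) = n - m - 1 := by omega
      rw [e1, e2]
      try push_cast
      try ring
    rw [htel, hTn, sub_zero, hTm] at hsum
    exact hsum
  have hDc : Continuous D := by
    apply Continuous.mul
    · exact (continuous_const.mul (continuous_pow m))
    · exact (continuous_const.sub continuous_id).pow _
  have hInt : ∀ a b : ℝ, ∫ t in a..b, D t = F b - F a := fun a b =>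
    intervalIntegral.integral_eq_sub_of_hasDerivAt (fun t _ => hSd t)
      (hDc.intervalIntegrable a b)
  have hF0 : F 0 = 0 := by
    apply Finset.sum_eq_zero
    intro j hj
    obtain ⟨hjm, hjn⟩ := Finset.mem_Ioc.mp hj
    rw [zero_pow (by omega)]
    ring
  have hF1 : F 1 = 1 := by
    simp only [hF]
    rw [Finset.sum_eq_single n]
    · simp [Nat.choose_self]
    · intro j hj hne
      obtain ⟨hjm, hjn⟩ := Finset.mem_Ioc.mp hj
      rw [sub_self, zero_pow (by omega)]
      ring
    · intro h
      exact absurd (Finset.mem_Ioc.mpr ⟨hmn, le_refl n⟩) h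
  -- nonnegativity of D on [0,1]
  have hDnn : ∀ t : ℝ, 0 ≤ t → t ≤ 1 → 0 ≤ D t := by
    intro t h1 h2
    simp only [hD]
    apply mul_nonneg (mul_nonneg _ (pow_nonneg h1 _)) (pow_nonneg (by linarith) _)
    simp only [hc]
    positivity
  set p0 : ℝ := (m:ℝ)/n with hp0def
  have hp0n : (0:ℝ) ≤ p0 := by positivity
  have hpp0 : p ≤ p0 := by
    rw [hp0def, le_div_iff₀ hn0']
    linarith [hpm]
  have hp0half : p0 ≤ 1/2 := by
    rw [hp0def, div_le_iff₀ hn0']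
    linarith
  have hp01 : p0 ≤ 1 := by linarith
  -- reduce to core integral inequality
  have hcore : ∫ t in (0:ℝ)..p0, D t ≤ ∫ t in p0..(1:ℝ), D t := by
    -- reflection
    have hrefl : ∫ t in (0:ℝ)..p0, D t = ∫ s in (0:ℝ)..p0, D (p0 - s) := by
      have := intervalIntegral.integral_comp_sub_left (a := 0) (b := p0) D p0
      simp only [sub_zero, sub_self] at this
      exact this.symm
    have hcompadd : ∫ s in (0:ℝ)..p0, D (p0 + s) = ∫ t in p0..(p0+p0), D t := by
      have := intervalIntegral.integral_comp_add_left (a := 0) (b := p0) D p0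
      simp only [add_zero] at this
      exact this
    have hpoint : ∀ s ∈ Set.Icc (0:ℝ) p0, D (p0 - s) ≤ D (p0 + s) := by
      intro s hs
      obtain ⟨hs0, hsp0⟩ := hs
      have hsn : s * n ≤ (m:ℝ) := (le_div_iff₀ hn0').mp hsp0
      set u : ℝ := (n:ℝ) * s with hu
      have hu0 : 0 ≤ u := by positivity
      have hua : u ≤ (m:ℝ) := by rw [hu]; linarith [hsn]
      have hBcast : ((n-m:ℕ):ℝ) = (n:ℝ) - m := Nat.cast_sub hmn.le
      have hkp := key_poly' m (n-m) u hu0 hua (by omega) (by omega)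
      rw [hBcast] at hkp
      have e1 : p0 - s = ((m:ℝ) - u)/n := by
        rw [hp0def, hu]; field_simp; try ring
      have e2 : 1 - (p0 - s) = (((n:ℝ) - m) + u)/n := by
        rw [hp0def, hu]; field_simp; try ring
      have e3 : p0 + s = ((m:ℝ) + u)/n := by
        rw [hp0def, hu]; field_simp; try ring
      have e4 : 1 - (p0 + s) = (((n:ℝ) - m) - u)/n := by
        rw [hp0def, hu]; field_simp; try ring
      simp only [hD]
      rw [e2, e4, e1, e3, div_pow, div_pow, div_pow, div_pow]
      have erw1 : c * (((m:ℝ) - u)^m / (n:ℝ)^m) * ((((n:ℝ) - m) + u)^(n-m-1) / (n:ℝ)^(n-m-1))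
          = (c * (((m:ℝ) - u)^m * (((n:ℝ) - m) + u)^(n-m-1))) / ((n:ℝ)^m * (n:ℝ)^(n-m-1)) := by
        ring
      have erw2 : c * (((m:ℝ) + u)^m / (n:ℝ)^m) * ((((n:ℝ) - m) - u)^(n-m-1) / (n:ℝ)^(n-m-1))
          = (c * (((m:ℝ) + u)^m * (((n:ℝ) - m) - u)^(n-m-1))) / ((n:ℝ)^m * (n:ℝ)^(n-m-1)) := by
        ring
      rw [erw1, erw2]
      apply div_le_div_of_nonneg_right _ (by positivity) |>.trans_eq rfl
      apply mul_le_mul_of_nonneg_left hkp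
      simp only [hc]; positivity
    have hmono : ∫ s in (0:ℝ)..p0, D (p0 - s) ≤ ∫ s in (0:ℝ)..p0, D (p0 + s) := by
      apply intervalIntegral.integral_mono_on hp0n
      · exact (hDc.comp (continuous_const.sub continuous_id)).intervalIntegrable _ _
      · exact (hDc.comp (continuous_const.add continuous_id)).intervalIntegrable _ _
      · exact hpoint
    have htail : ∫ t in p0..(p0+p0), D t ≤ ∫ t in p0..(1:ℝ), D t := by
      have hadj := intervalIntegral.integral_add_adjacent_intervals
        (hDc.intervalIntegrable (μ := MeasureTheory.volume) p0 (p0+p0)) (hDc.intervalIntegrable (p0+p0) 1)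
      have hnn : 0 ≤ ∫ t in (p0+p0)..(1:ℝ), D t := by
        apply intervalIntegral.integral_nonneg (by linarith)
        intro t ht
        exact hDnn t (by linarith [ht.1]) ht.2
      linarith [hadj, hnn]
    calc ∫ t in (0:ℝ)..p0, D t = ∫ s in (0:ℝ)..p0, D (p0 - s) := hrefl
      _ ≤ ∫ s in (0:ℝ)..p0, D (p0 + s) := hmono
      _ = ∫ t in p0..(p0+p0), D t := hcompadd
      _ ≤ ∫ t in p0..(1:ℝ), D t := htail
  -- extend to p
  have step1 : ∫ t in (0:ℝ)..p, D t ≤ ∫ t in (0:ℝ)..p0, D t := by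
    have hadj := intervalIntegral.integral_add_adjacent_intervals
      (hDc.intervalIntegrable (μ := MeasureTheory.volume) 0 p) (hDc.intervalIntegrable p p0)
    have hnn : 0 ≤ ∫ t in p..p0, D t := by
      apply intervalIntegral.integral_nonneg hpp0
      intro t ht
      exact hDnn t (le_trans hp0 ht.1) (le_trans ht.2 hp01)
    linarith [hadj, hnn]
  have step2 : ∫ t in p0..(1:ℝ), D t ≤ ∫ t in p..(1:ℝ), D t := by
    have hadj := intervalIntegral.integral_add_adjacent_intervals
      (hDc.intervalIntegrable (μ := MeasureTheory.volume) p p0) (hDc.intervalIntegrable p0 1)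
    have hnn : 0 ≤ ∫ t in p..p0, D t := by
      apply intervalIntegral.integral_nonneg hpp0
      intro t ht
      exact hDnn t (le_trans hp0 ht.1) (le_trans ht.2 hp01)
    linarith [hadj, hnn]
  have hfin : ∫ t in (0:ℝ)..p, D t ≤ ∫ t in p..(1:ℝ), D t :=
    step1.trans (hcore.trans step2)
  rw [hInt 0 p, hInt p 1, hF0, hF1] at hfin
  have : F p ≤ 1/2 := by linarith
  exact this

/-- If `X ~ Bin(n,p)`, then `P(X > ⌈np⌉) ≤ 1/2`. -/
theorem binomial_gt_ceil_mean_le_half (n : ℕ) (p : ℝ) (hp0 : 0 ≤ p) (hp1 : p ≤ 1) :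
    ∑ j ∈ Finset.Ioc (⌈(n : ℝ) * p⌉₊) n, (n.choose j : ℝ) * p ^ j * (1 - p) ^ (n - j)
      ≤ 1 / 2 := by
  set m : ℕ := ⌈(n : ℝ) * p⌉₊ with hm
  by_cases hnm : n ≤ m
  · rw [Finset.Ioc_eq_empty (by omega)]
    norm_num
  have hmn : m < n := by omega
  have hpm : (n:ℝ) * p ≤ m := Nat.le_ceil _
  by_cases hn2 : n ≤ 2*m+1
  · exact discrete_case n m p hp0 hp1 hmn hn2 hpm
  · have h2m : 2*m ≤ n := by omega
    by_cases hm0 : m = 0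
    · -- then p = 0 and every term vanishes
      have hn0' : (0:ℝ) < n := by
        have : 0 < n := by omega
        exact_mod_cast this
      have hp00 : p = 0 := by
        rw [hm0] at hpm
        simp at hpm
        nlinarith [hpm]
      rw [hp00]
      have : ∑ j ∈ Finset.Ioc m n, (n.choose j : ℝ) * (0:ℝ) ^ j * (1 - 0) ^ (n - j) = 0 := by
        apply Finset.sum_eq_zero
        intro j hj
        obtain ⟨hjm, hjn⟩ := Finset.mem_Ioc.mp hj
        rw [zero_pow (by omega)]
        ring
      rw [this]
      norm_num
    · exact analytic_case n m p hp0 hp1 (by omega) h2m hpm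
end

section
/- For all real t > 0, t^{⌈t+1⌉} · e^{-t} / ⌈t+1⌉! ≤ 1/5. -/
lemma poisson_poly_aux (M t : ℝ) (hM : 0 ≤ M) (ht : 0 < t) (h : t ≤ M + 2) :
    5*(M+4)*t^3 ≤ (M+1)*(M+2)*(M+3)*(M+4) + (M+2)*(M+3)*(M+4)*t
      + (M+3)*(M+4)*t^2 + (M+4)*t^3 + t^4 := by
  nlinarith [mul_nonneg (sub_nonneg.2 h) ht.le, sq_nonneg (t - M - 1), sq_nonneg (t-M-2),
    mul_nonneg (mul_nonneg (sub_nonneg.2 h) ht.le) ht.le, mul_nonneg hM ht.le,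
    mul_nonneg (mul_nonneg hM (sub_nonneg.2 h)) ht.le, sq_nonneg t,
    mul_nonneg (mul_nonneg hM hM) (sub_nonneg.2 h)]

lemma poisson_key (t : ℝ) (ht : 0 < t) :
    5 * t ^ (⌈t + 1⌉₊ : ℕ) ≤ (Nat.factorial ⌈t + 1⌉₊ : ℝ) * Real.exp t := by
  set n := ⌈t + 1⌉₊ with hn
  clear_value n
  have hle : t + 1 ≤ (n : ℝ) := by rw [hn]; exact Nat.le_ceil _
  have hn2 : 2 ≤ n := by
    have h1 : (1:ℕ) < n := by rw [hn]; exact Nat.lt_ceil.mpr (by push_cast; linarith)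
    omega
  rcases eq_or_lt_of_le hn2 with h2 | h3
  · -- n = 2, so t ≤ 1
    have ht1 : t ≤ 1 := by
      have : (n:ℝ) = 2 := by rw [← h2]; norm_num
      linarith [hle, this]
    have hs := Real.sum_le_exp_of_nonneg ht.le 4
    simp only [Finset.sum_range_succ, Finset.sum_range_zero] at hs
    norm_num [Nat.factorial] at hs
    rw [← h2]
    norm_num [Nat.factorial]
    nlinarith [hs, mul_nonneg (sq_nonneg (t-1)) (by linarith : (0:ℝ) ≤ t + 2)]
  · -- n ≥ 3
    obtain ⟨m, rfl⟩ : ∃ m, n = m + 3 := ⟨n - 3, by omega⟩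
    have hM : (0:ℝ) ≤ (m:ℝ) := Nat.cast_nonneg m
    have htM : t ≤ (m:ℝ) + 2 := by push_cast at hle; linarith
    have hs := Real.sum_le_exp_of_nonneg ht.le (m+5)
    have hsum : t^m/(m.factorial:ℝ) + t^(m+1)/((m+1).factorial:ℝ)
        + t^(m+2)/((m+2).factorial:ℝ) + t^(m+3)/((m+3).factorial:ℝ)
        + t^(m+4)/((m+4).factorial:ℝ) ≤ Real.exp t := by
      refine le_trans ?_ hs
      rw [show m+5 = (m+4)+1 from rfl, Finset.sum_range_succ, Finset.sum_range_succ,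
        Finset.sum_range_succ, Finset.sum_range_succ, Finset.sum_range_succ]
      have h0 : 0 ≤ ∑ i ∈ Finset.range m, t^i/(i.factorial:ℝ) :=
        Finset.sum_nonneg fun i _ => by positivity
      linarith
    have hF : (0:ℝ) < (m.factorial : ℝ) := by exact_mod_cast m.factorial_pos
    have hT : (0:ℝ) < t ^ m := pow_pos ht m
    have hpoly := poisson_poly_aux (m:ℝ) t hM ht htM
    have key2 : 5 * t ^ (m+3) ≤ ((m+3).factorial : ℝ) *
        (t^m/(m.factorial:ℝ) + t^(m+1)/((m+1).factorial:ℝ)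
        + t^(m+2)/((m+2).factorial:ℝ) + t^(m+3)/((m+3).factorial:ℝ)
        + t^(m+4)/((m+4).factorial:ℝ)) := by
      have heq : ((m+3).factorial : ℝ) *
          (t^m/(m.factorial:ℝ) + t^(m+1)/((m+1).factorial:ℝ)
          + t^(m+2)/((m+2).factorial:ℝ) + t^(m+3)/((m+3).factorial:ℝ)
          + t^(m+4)/((m+4).factorial:ℝ))
          = t^m/((m:ℝ)+4) * (((m:ℝ)+1)*((m:ℝ)+2)*((m:ℝ)+3)*((m:ℝ)+4)
            + ((m:ℝ)+2)*((m:ℝ)+3)*((m:ℝ)+4)*t + ((m:ℝ)+3)*((m:ℝ)+4)*t^2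
            + ((m:ℝ)+4)*t^3 + t^4) := by
        simp only [show m+4 = (m+3)+1 from rfl, show m+3 = (m+2)+1 from rfl,
          show m+2 = (m+1)+1 from rfl, Nat.factorial_succ, pow_succ]
        push_cast
        field_simp
        ring
      have hlhs : 5 * t ^ (m+3) = t^m/((m:ℝ)+4) * (5*((m:ℝ)+4)*t^3) := by
        rw [pow_add]
        field_simp
      rw [heq, hlhs]
      apply mul_le_mul_of_nonneg_left hpoly
      positivity
    calc 5 * t ^ (m+3) ≤ _ := key2
      _ ≤ ((m+3).factorial : ℝ) * Real.exp t := by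
        apply mul_le_mul_of_nonneg_left hsum
        positivity

/-- For all real `t > 0`, `t^{⌈t+1⌉} · e^{-t} / ⌈t+1⌉! ≤ 1/5`. -/
theorem poisson_above_mean_le (t : ℝ) (ht : 0 < t) :
    t ^ (⌈t + 1⌉₊ : ℕ) * Real.exp (-t) / (Nat.factorial ⌈t + 1⌉₊ : ℝ) ≤ 1 / 5 := by
  have key := poisson_key t ht
  have hF : (0:ℝ) < (Nat.factorial ⌈t + 1⌉₊ : ℝ) := by
    exact_mod_cast (Nat.factorial_pos _)
  rw [div_le_iff₀ hF]
  have h1 : Real.exp (-t) * Real.exp t = 1 := by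
    rw [← Real.exp_add]; simp
  nlinarith [mul_le_mul_of_nonneg_right key (Real.exp_pos (-t)).le, h1,
    Real.exp_pos (-t), Real.exp_pos t]
end

section
/- If a graph G has unique (r−1)-neighbourhoods (i.e., no two distinct vertices have isomorphic rooted balls of radius r−1), then G is reconstructible from its r-neighbourhoods: any graph H on the same number of vertices whose collection of rooted r-balls is isomorphic to that of G is isomorphic to G. -/
open SimpleGraph

section Helpers

variable {V W X : Type*}

/-- Lift a walk whose support lies in `S` to the induced subgraph. -/
lemma exists_walk_induce {G : SimpleGraph V} {S : Set V} :
    ∀ {u x : V} (p : G.Walk u x), (∀ y ∈ p.support, y ∈ S) →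
      ∀ (hu : u ∈ S) (hx : x ∈ S),
      ∃ q : (G.induce S).Walk ⟨u, hu⟩ ⟨x, hx⟩, q.length = p.length := by
  intro u x p
  induction p with
  | nil =>
    intro _ hu hx
    exact ⟨SimpleGraph.Walk.nil, rfl⟩
  | @cons a b c hadj p ih =>
    intro h hu hx
    have hb : b ∈ S := h b (by simp)
    obtain ⟨q, hq⟩ := ih (fun y hy => h y (by simp [hy])) hb hx
    have hadj' : (G.induce S).Adj ⟨a, hu⟩ ⟨b, hb⟩ := by simpa using hadj
    exact ⟨SimpleGraph.Walk.cons hadj' q, by simp [hq]⟩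

/-- Inclusion homomorphism of an induced subgraph. -/
def inclHom (G : SimpleGraph V) (S : Set V) : G.induce S →g G :=
  ⟨Subtype.val, fun {a b} h => h⟩

@[simp] lemma inclHom_apply {G : SimpleGraph V} {S : Set V} (x : S) :
    inclHom G S x = (x : V) := rfl

lemma dist_le_of_mem_support {G : SimpleGraph V} {u x y : V} (p : G.Walk u x)
    (hy : y ∈ p.support) : G.dist u y ≤ p.length := by
  classical
  exact le_trans (SimpleGraph.dist_le (p.takeUntil y hy)) (p.length_takeUntil_le hy)

lemma mem_ball_of_close {G : SimpleGraph V} {v u x : V} {r : ℕ} (hr : 1 ≤ r)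
    (hu : u = v ∨ G.Adj v u) (hx : G.dist u x ≤ r - 1) : G.dist v x ≤ r := by
  rcases hu with rfl | hadj
  · exact le_trans hx (Nat.sub_le r 1)
  · by_cases hre : G.Reachable u x
    · obtain ⟨p, hp⟩ := hre.exists_walk_length_eq_dist
      have := SimpleGraph.dist_le (SimpleGraph.Walk.cons hadj p)
      simp only [SimpleGraph.Walk.length_cons, hp] at this
      exact le_trans this (by omega)
    · have : ¬ G.Reachable v x := fun h => hre (hadj.reachable.symm.trans h)
      simp [SimpleGraph.dist_eq_zero_of_not_reachable this]

lemma iso_dist_le {α β : Type*} {A : SimpleGraph α} {B : SimpleGraph β}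
    (ψ : A ≃g B) (a b : α) : B.dist (ψ a) (ψ b) ≤ A.dist a b := by
  by_cases h : A.Reachable a b
  · obtain ⟨p, hp⟩ := h.exists_walk_length_eq_dist
    calc B.dist (ψ a) (ψ b) ≤ (p.map ψ.toHom).length := SimpleGraph.dist_le _
      _ = p.length := by simp
      _ = A.dist a b := hp
  · have h' : ¬ B.Reachable (ψ a) (ψ b) := by
      intro h'
      apply h
      have := h'.map ψ.symm.toHom
      simpa using this
    simp [SimpleGraph.dist_eq_zero_of_not_reachable h']

lemma iso_dist_eq {α β : Type*} {A : SimpleGraph α} {B : SimpleGraph β}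
    (ψ : A ≃g B) (a b : α) : B.dist (ψ a) (ψ b) = A.dist a b := by
  refine le_antisymm (iso_dist_le ψ a b) ?_
  have := iso_dist_le ψ.symm (ψ a) (ψ b)
  simpa using this

/-- Key distance lemma: inside the `r`-ball around `v`, the induced distance from a
vertex `u` at distance ≤ 1 from `v` to any vertex is ≤ r-1 iff the global distance is. -/
lemma dist_induce_iff {G : SimpleGraph V} {v u x : V} {r : ℕ} (hr : 1 ≤ r)
    (hu : u = v ∨ G.Adj v u) (hu' : G.dist v u ≤ r) (hx : G.dist v x ≤ r) :
    (G.induce {y | G.dist v y ≤ r}).dist ⟨u, hu'⟩ ⟨x, hx⟩ ≤ r - 1 ↔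
      G.dist u x ≤ r - 1 := by
  set S : Set V := {y | G.dist v y ≤ r} with hS
  have hv : v ∈ S := by simp [hS, SimpleGraph.dist_self]
  constructor
  · intro hd
    by_cases hre : (G.induce S).Reachable ⟨u, hu'⟩ ⟨x, hx⟩
    · obtain ⟨q, hq⟩ := hre.exists_walk_length_eq_dist
      have h1 : G.dist u x ≤ ((q.map (inclHom G S)).copy rfl rfl : G.Walk u x).length :=
        SimpleGraph.dist_le _
      have hlen : ((q.map (inclHom G S)).copy rfl rfl : G.Walk u x).length = q.length :=
        SimpleGraph.Walk.length_map _ _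
      rw [hlen, hq] at h1
      exact le_trans h1 hd
    · have hreG : ¬ G.Reachable u x := by
        intro hreG
        apply hre
        have hvu : G.Reachable v u := by
          rcases hu with rfl | hadj
          · exact SimpleGraph.Reachable.refl _
          · exact hadj.reachable
        have hvx : G.Reachable v x := hvu.trans hreG
        obtain ⟨p, hp⟩ := hvx.exists_walk_length_eq_dist
        have hsup : ∀ y ∈ p.support, y ∈ S := fun y hy =>
          le_trans (dist_le_of_mem_support p hy) (le_trans (le_of_eq hp) hx)
        obtain ⟨q, _⟩ := exists_walk_induce p hsup hv hx
        have huvS : (G.induce S).Reachable ⟨u, hu'⟩ ⟨v, hv⟩ := by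
          rcases hu with rfl | hadj
          · exact SimpleGraph.Reachable.refl _
          · exact (SimpleGraph.Adj.reachable (by simpa using hadj.symm))
        exact huvS.trans ⟨q⟩
      simp [SimpleGraph.dist_eq_zero_of_not_reachable hreG]
  · intro hd
    by_cases hre : G.Reachable u x
    · obtain ⟨p, hp⟩ := hre.exists_walk_length_eq_dist
      have hsup : ∀ y ∈ p.support, y ∈ S := fun y hy =>
        mem_ball_of_close hr hu
          (le_trans (dist_le_of_mem_support p hy) (le_trans (le_of_eq hp) hd))
      obtain ⟨q, hq⟩ := exists_walk_induce p hsup hu' hx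
      exact le_trans (SimpleGraph.dist_le q) (by rw [hq, hp]; exact hd)
    · have : ¬ (G.induce S).Reachable ⟨u, hu'⟩ ⟨x, hx⟩ := by
        intro ⟨q⟩
        have qq : G.Walk u x := (q.map (inclHom G S)).copy rfl rfl
        exact hre ⟨qq⟩
      have h0 : (G.induce {y | G.dist v y ≤ r}).dist ⟨u, hu'⟩ ⟨x, hx⟩ = 0 :=
        SimpleGraph.dist_eq_zero_of_not_reachable this
      omega

end Helpers

/-- The rooted `r`-ball around `v` in `G` is isomorphic to the rooted `r`-ball around
`w` in `H`: an isomorphism of the induced subgraphs on the vertices at distance at most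
`r` which sends the root to the root. -/
def BallIso {V W : Type*} (G : SimpleGraph V) (H : SimpleGraph W) (r : ℕ)
    (v : V) (w : W) : Prop :=
  ∃ φ : (G.induce {u | G.dist v u ≤ r}) ≃g (H.induce {u | H.dist w u ≤ r}),
    (φ ⟨v, by simp [SimpleGraph.dist_self]⟩ : W) = w

/-- `G` and `H` have isomorphic `r`-neighbourhoods: a bijection of vertex sets matching
up isomorphic rooted `r`-balls. -/
def SameNbhds {V W : Type*} (G : SimpleGraph V) (H : SimpleGraph W) (r : ℕ) : Prop :=
  ∃ φ : V ≃ W, ∀ v : V, BallIso G H r v (φ v)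

section BallIsoLemmas

variable {V W X : Type*} {G : SimpleGraph V} {H : SimpleGraph W} {K : SimpleGraph X}

lemma BallIso.symm {r : ℕ} {v : V} {w : W} (h : BallIso G H r v w) :
    BallIso H G r w v := by
  obtain ⟨φ, hφ⟩ := h
  refine ⟨φ.symm, ?_⟩
  have h1 : φ ⟨v, by simp [SimpleGraph.dist_self]⟩ = ⟨w, by simp [SimpleGraph.dist_self]⟩ :=
    Subtype.ext hφ
  have := φ.toEquiv.symm_apply_apply ⟨v, by simp [SimpleGraph.dist_self]⟩
  rw [show φ.toEquiv ⟨v, by simp [SimpleGraph.dist_self]⟩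
      = (⟨w, by simp [SimpleGraph.dist_self]⟩ : {u | H.dist w u ≤ r}) from h1] at this
  exact congrArg Subtype.val this

lemma BallIso.trans {r : ℕ} {v : V} {w : W} {x : X} (h1 : BallIso G H r v w)
    (h2 : BallIso H K r w x) : BallIso G K r v x := by
  obtain ⟨φ1, hφ1⟩ := h1
  obtain ⟨φ2, hφ2⟩ := h2
  refine ⟨φ1.trans φ2, ?_⟩
  have e1 : φ1 ⟨v, by simp [SimpleGraph.dist_self]⟩
      = ⟨w, by simp [SimpleGraph.dist_self]⟩ := Subtype.ext hφ1
  show (φ2 (φ1 ⟨v, by simp [SimpleGraph.dist_self]⟩) : X) = x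
  rw [e1]
  exact hφ2

/-- A root-preserving `r`-ball isomorphism gives an `(r-1)`-ball isomorphism at any
vertex at distance at most 1 from the root. -/
lemma ballIso_shift {r : ℕ} (hr : 1 ≤ r) {v u : V} {w : W}
    (ψ : (G.induce {y | G.dist v y ≤ r}) ≃g (H.induce {y | H.dist w y ≤ r}))
    (hψ : (ψ ⟨v, by simp [SimpleGraph.dist_self]⟩ : W) = w)
    (hu : u = v ∨ G.Adj v u) (hu' : G.dist v u ≤ r) :
    BallIso G H (r - 1) u (ψ ⟨u, hu'⟩) := by
  set w' : W := (ψ ⟨u, hu'⟩ : W) with hw'def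
  have hw' : H.dist w w' ≤ r := (ψ ⟨u, hu'⟩).2
  have hv : G.dist v v ≤ r := by simp [SimpleGraph.dist_self]
  have hw : H.dist w w ≤ r := by simp [SimpleGraph.dist_self]
  have hwu : w' = w ∨ H.Adj w w' := by
    rcases hu with rfl | hadj
    · exact Or.inl hψ
    · right
      have hadj' : (G.induce {y | G.dist v y ≤ r}).Adj ⟨v, hv⟩ ⟨u, hu'⟩ := by simpa using hadj
      have := ψ.map_rel_iff.mpr hadj'
      have h2 : H.Adj (ψ ⟨v, hv⟩ : W) (ψ ⟨u, hu'⟩ : W) := this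
      rwa [hψ] at h2
  -- membership maps
  have memG : ∀ x : V, G.dist u x ≤ r - 1 → G.dist v x ≤ r := fun x hx =>
    mem_ball_of_close hr hu hx
  have memH : ∀ y : W, H.dist w' y ≤ r - 1 → H.dist w y ≤ r := fun y hy =>
    mem_ball_of_close hr hwu hy
  -- forward map has small distance
  have fwd : ∀ (x : V) (hx : G.dist u x ≤ r - 1),
      H.dist w' (ψ ⟨x, memG x hx⟩ : W) ≤ r - 1 := by
    intro x hx
    have hxS : G.dist v x ≤ r := memG x hx
    have hd1 : (G.induce {y | G.dist v y ≤ r}).dist ⟨u, hu'⟩ ⟨x, hxS⟩ ≤ r - 1 :=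
      (dist_induce_iff hr hu hu' hxS).mpr hx
    have hd2 : (H.induce {y | H.dist w y ≤ r}).dist (ψ ⟨u, hu'⟩) (ψ ⟨x, hxS⟩) ≤ r - 1 := by
      rwa [iso_dist_eq ψ]
    exact (dist_induce_iff hr hwu hw' (ψ ⟨x, hxS⟩).2).mp hd2
  -- backward map has small distance
  have bwd : ∀ (y : W) (hy : H.dist w' y ≤ r - 1),
      G.dist u (ψ.symm ⟨y, memH y hy⟩ : V) ≤ r - 1 := by
    intro y hy
    have hyS : H.dist w y ≤ r := memH y hy
    have hd1 : (H.induce {z | H.dist w z ≤ r}).dist ⟨w', hw'⟩ ⟨y, hyS⟩ ≤ r - 1 :=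
      (dist_induce_iff hr hwu hw' hyS).mpr hy
    have hd2 : (G.induce {z | G.dist v z ≤ r}).dist ⟨u, hu'⟩ (ψ.symm ⟨y, hyS⟩) ≤ r - 1 := by
      have := iso_dist_eq ψ ⟨u, hu'⟩ (ψ.symm ⟨y, hyS⟩)
      rw [ψ.apply_symm_apply] at this
      rw [← this]
      exact hd1
    exact (dist_induce_iff hr hu hu' (ψ.symm ⟨y, hyS⟩).2).mp hd2
  refine ⟨⟨⟨fun x => ⟨(ψ ⟨x, memG x x.2⟩ : W), fwd x x.2⟩,
      fun y => ⟨(ψ.symm ⟨y, memH y y.2⟩ : V), bwd y y.2⟩, ?_, ?_⟩, ?_⟩, rfl⟩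
  · intro x
    apply Subtype.ext
    show (ψ.symm ⟨(ψ ⟨(x : V), memG x x.2⟩ : W), _⟩ : V) = x
    have : (⟨(ψ ⟨(x : V), memG x x.2⟩ : W), memH _ (fwd x x.2)⟩ :
        {y | H.dist w y ≤ r}) = ψ ⟨(x : V), memG x x.2⟩ := Subtype.ext rfl
    rw [this, ψ.symm_apply_apply]
  · intro y
    apply Subtype.ext
    show (ψ ⟨(ψ.symm ⟨(y : W), memH y y.2⟩ : V), _⟩ : W) = y
    have : (⟨(ψ.symm ⟨(y : W), memH y y.2⟩ : V), memG _ (bwd y y.2)⟩ :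
        {x | G.dist v x ≤ r}) = ψ.symm ⟨(y : W), memH y y.2⟩ := Subtype.ext rfl
    rw [this, ψ.apply_symm_apply]
  · intro a b
    show (H.induce _).Adj _ _ ↔ (G.induce _).Adj _ _
    have := ψ.map_rel_iff (a := ⟨(a : V), memG a a.2⟩) (b := ⟨(b : V), memG b b.2⟩)
    simpa using this

end BallIsoLemmas

/-- If a finite graph `G` has unique `(r−1)`-neighbourhoods, then `G` is reconstructible
from its `r`-neighbourhoods: any graph `H` whose collection of rooted `r`-balls is
isomorphic to that of `G` is isomorphic to `G`. -/
theorem reconstructible_of_unique_neighbourhoods {V W : Type*} [Fintype V] [Fintype W]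
    (G : SimpleGraph V) (r : ℕ) (hr : 1 ≤ r)
    (huniq : ∀ v v' : V, BallIso G G (r - 1) v v' → v = v')
    (H : SimpleGraph W) (hsame : SameNbhds G H r) :
    Nonempty (G ≃g H) := by
  obtain ⟨φ, hφ⟩ := hsame
  -- Every vertex of `H` whose `(r-1)`-ball matches that of `u` must be `φ u`.
  have key : ∀ (u : V) (w' : W), BallIso G H (r - 1) u w' → w' = φ u := by
    intro u w' hbi
    have h2 : BallIso G H (r - 1) (φ.symm w') w' := by
      obtain ⟨ψ, hψ⟩ := hφ (φ.symm w')
      have hs := ballIso_shift hr ψ hψ (Or.inl rfl) (by simp [SimpleGraph.dist_self])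
      have he : ((ψ ⟨φ.symm w', by simp [SimpleGraph.dist_self]⟩ : W)) = w' := by
        rw [hψ, φ.apply_symm_apply]
      rwa [he] at hs
    have := huniq u (φ.symm w') (hbi.trans h2.symm)
    rw [this, φ.apply_symm_apply]
  refine ⟨⟨φ, ?_⟩⟩
  intro a b
  obtain ⟨ψ, hψ⟩ := hφ a
  have hav : G.dist a a ≤ r := by simp [SimpleGraph.dist_self]
  constructor
  · -- H.Adj (φ a) (φ b) → G.Adj a b
    intro hadj
    have hb' : H.dist (φ a) (φ b) ≤ r := by
      have : H.dist (φ a) (φ b) ≤ 1 := by simpa using SimpleGraph.dist_le hadj.toWalk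
      omega
    have h1 : ψ ⟨a, by simp [SimpleGraph.dist_self]⟩
        = ⟨φ a, by simp [SimpleGraph.dist_self]⟩ := Subtype.ext hψ
    have hroot : ψ.symm ⟨φ a, by simp [SimpleGraph.dist_self]⟩
        = ⟨a, by simp [SimpleGraph.dist_self]⟩ := by
      rw [← h1, ψ.symm_apply_apply]
    set c : {y | G.dist a y ≤ r} := ψ.symm ⟨φ b, hb'⟩ with hc
    have hadjc : G.Adj a (c : V) := by
      have hA : (H.induce {y | H.dist (φ a) y ≤ r}).Adj
          ⟨φ a, by simp [SimpleGraph.dist_self]⟩ ⟨φ b, hb'⟩ := by simpa using hadj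
      have := ψ.symm.map_rel_iff.mpr hA
      rw [hroot] at this
      simpa using this
    have hshift := ballIso_shift hr ψ hψ (Or.inr hadjc) c.2
    have hcc : (ψ ⟨(c : V), c.2⟩ : W) = φ b := by
      show (ψ c : W) = φ b
      rw [hc, ψ.apply_symm_apply]
    rw [hcc] at hshift
    have := key _ _ hshift
    have hb : b = (c : V) := φ.injective this
    rw [hb]
    exact hadjc
  · -- G.Adj a b → H.Adj (φ a) (φ b)
    intro hadj
    have hb' : G.dist a b ≤ r := by
      have : G.dist a b ≤ 1 := by simpa using SimpleGraph.dist_le hadj.toWalk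
      omega
    have hshift := ballIso_shift hr ψ hψ (Or.inr hadj) hb'
    have := key _ _ hshift
    have hadj' : (G.induce {y | G.dist a y ≤ r}).Adj
        ⟨a, by simp [SimpleGraph.dist_self]⟩ ⟨b, hb'⟩ := by simpa using hadj
    have h2 := ψ.map_rel_iff.mpr hadj'
    have h3 : H.Adj (ψ ⟨a, by simp [SimpleGraph.dist_self]⟩ : W) (ψ ⟨b, hb'⟩ : W) := h2
    rwa [hψ, this] at h3
end

section
/- A graph that contains two vertex-disjoint edges, each forming a connected component (i.e., two components that are single edges), is not exactly reconstructible from its 1-neighbourhoods: there exists a different labelled graph on the same vertex set with identical rooted 1-neighbourhoods at every vertex. -/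
lemma iso_edist_le {V W : Type*} {G : SimpleGraph V} {H : SimpleGraph W}
    (ψ : G ≃g H) (u v : V) : H.edist (ψ u) (ψ v) ≤ G.edist u v := by
  rw [SimpleGraph.edist_eq_sInf (G := G)]
  refine le_sInf ?_
  rintro x ⟨p, rfl⟩
  have := SimpleGraph.edist_le (p.map ψ.toHom)
  simpa using this

lemma iso_edist_eq {V W : Type*} {G : SimpleGraph V} {H : SimpleGraph W}
    (ψ : G ≃g H) (u v : V) : H.edist (ψ u) (ψ v) = G.edist u v := by
  refine le_antisymm (iso_edist_le ψ u v) ?_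
  have := iso_edist_le ψ.symm (ψ u) (ψ v)
  simpa using this

lemma iso_dist_eq_s16 {V W : Type*} {G : SimpleGraph V} {H : SimpleGraph W}
    (ψ : G ≃g H) (u v : V) : H.dist (ψ u) (ψ v) = G.dist u v := by
  unfold SimpleGraph.dist
  rw [iso_edist_eq]

/-- A graph isomorphism fixing `w` gives a rooted ball isomorphism. -/
lemma ballIso_of_iso {V : Type*} {G H : SimpleGraph V} (ψ : G ≃g H) (r : ℕ)
    (w : V) (hw : ψ w = w) : BallIso G H r w w := by
  have hball : ∀ u : V, G.dist w u ≤ r → H.dist w (ψ u) ≤ r := by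
    intro u hu
    have := iso_dist_eq_s16 ψ w u
    rw [hw] at this
    omega
  have hball' : ∀ u : V, H.dist w u ≤ r → G.dist w (ψ.symm u) ≤ r := by
    intro u hu
    have := iso_dist_eq_s16 ψ w (ψ.symm u)
    rw [hw] at this
    simp only [RelIso.apply_symm_apply] at this
    omega
  refine ⟨⟨⟨fun x => ⟨ψ x.1, hball x.1 x.2⟩, fun x => ⟨ψ.symm x.1, hball' x.1 x.2⟩,
    fun x => by simp, fun x => by simp⟩, fun {x y} => ψ.map_adj_iff⟩, ?_⟩
  exact hw

/-- A graph with two components that are single edges is not exactly reconstructible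
from its 1-neighbourhoods: there is a different labelled graph on the same vertex set
with an isomorphic rooted 1-neighbourhood at every vertex. -/
theorem two_edge_components_not_exactly_reconstructible {V : Type*} (G : SimpleGraph V)
    (a b c d : V) (hdist : a ≠ b ∧ a ≠ c ∧ a ≠ d ∧ b ≠ c ∧ b ≠ d ∧ c ≠ d)
    (hab : G.Adj a b) (hcd : G.Adj c d)
    (ha : G.neighborSet a = {b}) (hb : G.neighborSet b = {a})
    (hc : G.neighborSet c = {d}) (hd : G.neighborSet d = {c}) :
    ∃ H : SimpleGraph V, H ≠ G ∧ ∀ w : V, BallIso G H 1 w w := by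
  classical
  obtain ⟨hab', hac, had, hbc, hbd, hcd'⟩ := hdist
  have hmem : ∀ {x y z : V}, G.neighborSet x = {z} → G.Adj x y → y = z := by
    intro x y z hs hxy
    have hy : y ∈ G.neighborSet x := hxy
    rw [hs] at hy
    exact hy
  have adj_cases : ∀ x y, G.Adj x y →
      (x = a ∧ y = b) ∨ (x = b ∧ y = a) ∨ (x = c ∧ y = d) ∨ (x = d ∧ y = c) ∨
      (x ≠ a ∧ x ≠ b ∧ x ≠ c ∧ x ≠ d ∧ y ≠ a ∧ y ≠ b ∧ y ≠ c ∧ y ≠ d) := by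
    intro x y hxy
    by_cases hxa : x = a
    · subst hxa; exact Or.inl ⟨rfl, hmem ha hxy⟩
    by_cases hxb : x = b
    · subst hxb; exact Or.inr (Or.inl ⟨rfl, hmem hb hxy⟩)
    by_cases hxc : x = c
    · subst hxc; exact Or.inr (Or.inr (Or.inl ⟨rfl, hmem hc hxy⟩))
    by_cases hxd : x = d
    · subst hxd; exact Or.inr (Or.inr (Or.inr (Or.inl ⟨rfl, hmem hd hxy⟩)))
    refine Or.inr (Or.inr (Or.inr (Or.inr ⟨hxa, hxb, hxc, hxd, ?_, ?_, ?_, ?_⟩)))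
    · rintro rfl; exact hxb (hmem ha hxy.symm)
    · rintro rfl; exact hxa (hmem hb hxy.symm)
    · rintro rfl; exact hxd (hmem hc hxy.symm)
    · rintro rfl; exact hxc (hmem hd hxy.symm)
  set σ : Equiv.Perm V := Equiv.swap b c with hσ
  set τ : Equiv.Perm V := Equiv.swap a d with hτ
  have sa : σ a = a := Equiv.swap_apply_of_ne_of_ne hab' hac
  have sb : σ b = c := Equiv.swap_apply_left b c
  have sc : σ c = b := Equiv.swap_apply_right b c
  have sd : σ d = d := Equiv.swap_apply_of_ne_of_ne hbd.symm hcd'.symm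
  have sx : ∀ x, x ≠ b → x ≠ c → σ x = x := fun x h1 h2 =>
    Equiv.swap_apply_of_ne_of_ne h1 h2
  have ta : τ a = d := Equiv.swap_apply_left a d
  have td : τ d = a := Equiv.swap_apply_right a d
  have tb : τ b = b := Equiv.swap_apply_of_ne_of_ne hab'.symm hbd
  have tc : τ c = c := Equiv.swap_apply_of_ne_of_ne hac.symm hcd'
  set H : SimpleGraph V := G.comap σ with hH
  have hHadj : ∀ x y, H.Adj x y ↔ G.Adj (σ x) (σ y) := fun _ _ => Iff.rfl
  refine ⟨H, ?_, ?_⟩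
  · intro hEq
    have h1 : H.Adj a c := by rw [hHadj, sa, sc]; exact hab
    rw [hEq] at h1
    exact hbc (hmem ha h1).symm
  · have hauto : ∀ x y, G.Adj x y → G.Adj (σ (τ x)) (σ (τ y)) := by
      intro x y hxy
      rcases adj_cases x y hxy with ⟨rfl, rfl⟩ | ⟨rfl, rfl⟩ | ⟨rfl, rfl⟩ | ⟨rfl, rfl⟩ |
        ⟨h1, h2, h3, h4, h5, h6, h7, h8⟩
      · rw [ta, tb, sd, sb]; exact hcd.symm
      · rw [ta, tb, sd, sb]; exact hcd
      · rw [tc, td, sc, sa]; exact hab.symm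
      · rw [td, tc, sa, sc]; exact hab
      · have tx : τ x = x := Equiv.swap_apply_of_ne_of_ne h1 h4
        have ty : τ y = y := Equiv.swap_apply_of_ne_of_ne h5 h8
        rw [tx, ty, sx x h2 h3, sx y h6 h7]
        exact hxy
    have hψ1 : ∃ ψ : G ≃g H, ∀ x, ψ x = σ x := by
      refine ⟨⟨σ, ?_⟩, fun _ => rfl⟩
      intro x y
      rw [hHadj]
      simp [hσ, Equiv.swap_apply_self]
    have hψ2 : ∃ ψ : G ≃g H, ∀ x, ψ x = τ x := by
      refine ⟨⟨τ, ?_⟩, fun _ => rfl⟩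
      intro x y
      rw [hHadj]
      have hinv : ∀ x, σ (τ (σ (τ x))) = x := by
        intro x
        by_cases h1 : x = a
        · subst h1; rw [ta, sd, td, sa]
        by_cases h2 : x = b
        · subst h2; rw [tb, sb, tc, sc]
        by_cases h3 : x = c
        · subst h3; rw [tc, sc, tb, sb]
        by_cases h4 : x = d
        · subst h4; rw [td, sa, ta, sd]
        · rw [Equiv.swap_apply_of_ne_of_ne h1 h4, sx x h2 h3,
            Equiv.swap_apply_of_ne_of_ne h1 h4, sx x h2 h3]
      constructor
      · intro h
        have := hauto _ _ h
        rw [hinv x, hinv y] at this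
        exact this
      · exact hauto x y
    obtain ⟨ψ1, hψ1⟩ := hψ1
    obtain ⟨ψ2, hψ2⟩ := hψ2
    intro w
    by_cases hwb : w = b
    · subst hwb; exact ballIso_of_iso ψ2 1 _ ((hψ2 _).trans tb)
    by_cases hwc : w = c
    · subst hwc; exact ballIso_of_iso ψ2 1 _ ((hψ2 _).trans tc)
    · exact ballIso_of_iso ψ1 1 w ((hψ1 w).trans (sx w hwb hwc))
end
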